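/- arXiv:1310.6617 — 4 statements merged into one kernel-verified Lean document; each statement's English description precedes it below -/
import Mathlib

section
/- Let M be a lattice of rank n, and for each i in a finite index set J let A_i be a nonempty finite subset of M with associated difference lattice L_{A_i} generated by {a - a_0 : a in A_i} for a fixed a_0 in A_i. If I is a subset of the index set with rank(sum over i in I of L_{A_i}) < #I, then there exists a subset J of I such that the subfamily (A_j)_{j in J} is essential, i.e., #J = rank(sum_{j in J} L_{A_j}) + 1 and #J' <= rank(sum_{j in J'} L_{A_j}) for all proper subsets J' of J. -/
/-- The "difference lattice" of a finite subset `A` of a lattice `M`: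
the subgroup generated by all differences of elements of `A`. -/
def diffLattice {M : Type*} [AddCommGroup M] (A : Finset M) : Submodule ℤ M :=
  Submodule.span ℤ {x | ∃ a ∈ A, ∃ b ∈ A, x = a - b}

/-- A subfamily `(A_j)_{j ∈ J}` of a family of finite subsets of a lattice is *essential*
if `#J = rank(L_J) + 1` and `#J' ≤ rank(L_{J'})` for every proper subset `J'` of `J`,
where `L_I = ∑_{i ∈ I} L_{A_i}`. -/
def IsEssential {M : Type*} [AddCommGroup M] {κ : Type*} (A : κ → Finset M)
    (J : Finset κ) : Prop :=
  J.card = Module.finrank ℤ ↥(∑ j ∈ J, diffLattice (A j)) + 1 ∧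
  ∀ J' ⊂ J, J'.card ≤ Module.finrank ℤ ↥(∑ j ∈ J', diffLattice (A j))

/-- If `rank (∑_{i ∈ I} L_{A_i}) < #I`, then some subfamily indexed by a
subset `J ⊆ I` is essential. -/
theorem exists_essential_subfamily {n : ℕ} {M : Type*} [AddCommGroup M]
    [Module.Free ℤ M] [Module.Finite ℤ M] (hrk : Module.finrank ℤ M = n)
    {κ : Type*} [Fintype κ] (A : κ → Finset M) (hA : ∀ i, (A i).Nonempty)
    (I : Finset κ)
    (hI : Module.finrank ℤ ↥(∑ i ∈ I, diffLattice (A i)) < I.card) :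
    ∃ J ⊆ I, IsEssential A J := by
  classical
  have : IsNoetherian ℤ M := inferInstance
  -- set of bad subsets
  set S : Finset (Finset κ) :=
    (I.powerset.filter fun J => Module.finrank ℤ ↥(∑ j ∈ J, diffLattice (A j)) < J.card) with hS
  have hIS : I ∈ S := by
    simp [hS, Finset.mem_filter, Finset.mem_powerset, hI]
  obtain ⟨J, hJS, hmin⟩ := S.exists_min_image Finset.card ⟨I, hIS⟩
  simp only [hS, Finset.mem_filter, Finset.mem_powerset] at hJS
  obtain ⟨hJI, hJbad⟩ := hJS
  refine ⟨J, hJI, ?_, ?_⟩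
  · -- equality of card
    have hJne : J.Nonempty := by
      rw [← Finset.card_pos]; omega
    obtain ⟨j, hj⟩ := hJne
    have hsub : J.erase j ⊂ J := Finset.erase_ssubset hj
    have herase : (J.erase j).card ≤
        Module.finrank ℤ ↥(∑ i ∈ J.erase j, diffLattice (A i)) := by
      by_contra h
      push_neg at h
      have : J.erase j ∈ S := by
        simp only [hS, Finset.mem_filter, Finset.mem_powerset]
        exact ⟨hsub.subset.trans hJI, h⟩
      have := hmin _ this
      have := Finset.card_lt_card hsub
      omega
    have hle : (∑ i ∈ J.erase j, diffLattice (A i)) ≤ ∑ i ∈ J, diffLattice (A i) :=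
      Finset.sum_le_sum_of_subset hsub.subset
    have hmono := Submodule.finrank_mono (R := ℤ) (M := M) hle
    have hcard : (J.erase j).card = J.card - 1 := Finset.card_erase_of_mem hj
    omega
  · intro J' hJ'
    by_contra h
    push_neg at h
    have : J' ∈ S := by
      simp only [hS, Finset.mem_filter, Finset.mem_powerset]
      exact ⟨hJ'.subset.trans hJI, h⟩
    have := hmin _ this
    have := Finset.card_lt_card hJ'
    omega
end

section
/- Let M be a lattice of rank n and A_0, ..., A_n nonempty finite subsets of M. If for every subset I of {0,...,n} one has rank(sum_{i in I} L_{A_i}) >= #I - 1, then there is exactly one subset J of {0,...,n} such that the subfamily (A_j)_{j in J} is essential. -/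
/-- Finrank of submodules of a finite free `ℤ`-module is "modular". -/
lemma finrank_sup_add_finrank_inf_eq' {M : Type*} [AddCommGroup M] [Module.Free ℤ M]
    [Module.Finite ℤ M] (p q : Submodule ℤ M) :
    Module.finrank ℤ ↥(p ⊔ q) + Module.finrank ℤ ↥(p ⊓ q) =
      Module.finrank ℤ ↥p + Module.finrank ℤ ↥q := by
  have h := Submodule.rank_sup_add_rank_inf_eq p q
  have h1 := Module.rank_lt_aleph0 ℤ ↥(p ⊔ q)
  have h2 := Module.rank_lt_aleph0 ℤ ↥(p ⊓ q)
  have h3 := Module.rank_lt_aleph0 ℤ ↥p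
  have h4 := Module.rank_lt_aleph0 ℤ ↥q
  have := congrArg Cardinal.toNat h
  rwa [Cardinal.toNat_add h1 h2, Cardinal.toNat_add h3 h4] at this

/-- Let `A_0, …, A_n` be nonempty finite subsets of a lattice `M`
of rank `n`. If `rank(∑_{i ∈ I} L_{A_i}) ≥ #I - 1` for every subset `I` of `{0,…,n}`,
then there is exactly one essential subfamily. -/
theorem existsUnique_essential_subfamily {n : ℕ} {M : Type*} [AddCommGroup M]
    [Module.Free ℤ M] [Module.Finite ℤ M] (hrk : Module.finrank ℤ M = n)
    (A : Fin (n + 1) → Finset M) (hA : ∀ i, (A i).Nonempty)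
    (h : ∀ I : Finset (Fin (n + 1)),
      I.card ≤ Module.finrank ℤ ↥(∑ i ∈ I, diffLattice (A i)) + 1) :
    ∃! J : Finset (Fin (n + 1)), IsEssential A J := by
  classical
  set g : Fin (n + 1) → Submodule ℤ M := fun i => diffLattice (A i) with hg
  set f : Finset (Fin (n + 1)) → ℕ :=
    fun I => Module.finrank ℤ ↥(∑ i ∈ I, g i) with hf
  -- sums of submodules are sups
  have hsup : ∀ I : Finset (Fin (n + 1)), (∑ i ∈ I, g i) = I.sup g := by
    intro I
    induction I using Finset.cons_induction with
    | empty => simp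
    | cons a s ha ih =>
      rw [Finset.sum_cons, Finset.sup_cons, ih, Submodule.add_eq_sup]
  have hfs : ∀ I : Finset (Fin (n + 1)), f I = Module.finrank ℤ ↥(I.sup g) := by
    intro I
    simp only [hf]
    exact congrArg (fun p : Submodule ℤ M => Module.finrank ℤ ↥p) (hsup I)
  have h' : ∀ I : Finset (Fin (n + 1)), I.card ≤ f I + 1 := h
  -- submodularity
  have hsubmod : ∀ I J : Finset (Fin (n + 1)), f (I ∪ J) + f (I ∩ J) ≤ f I + f J := by
    intro I J
    have h1 : f (I ∪ J) = Module.finrank ℤ ↥(I.sup g ⊔ J.sup g) := by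
      rw [hfs, Finset.sup_union]
    have h2 : f (I ∩ J) ≤ Module.finrank ℤ ↥(I.sup g ⊓ J.sup g) := by
      rw [hfs]
      refine Submodule.finrank_mono ?_
      exact le_inf (Finset.sup_mono Finset.inter_subset_left)
        (Finset.sup_mono Finset.inter_subset_right)
    calc f (I ∪ J) + f (I ∩ J)
        ≤ Module.finrank ℤ ↥(I.sup g ⊔ J.sup g) + Module.finrank ℤ ↥(I.sup g ⊓ J.sup g) := by
          omega
      _ = Module.finrank ℤ ↥(I.sup g) + Module.finrank ℤ ↥(J.sup g) :=
          finrank_sup_add_finrank_inf_eq' _ _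
      _ = f I + f J := by rw [hfs, hfs]
  -- the set of "tight" index sets
  set T : Finset (Finset (Fin (n + 1))) :=
    Finset.univ.filter (fun J => J.card = f J + 1) with hT
  have hunivT : (Finset.univ : Finset (Fin (n + 1))) ∈ T := by
    have h1 : f Finset.univ ≤ n := by
      rw [hfs]
      exact le_trans (Submodule.finrank_le _) hrk.le
    have h2 := h' Finset.univ
    have h3 : (Finset.univ : Finset (Fin (n + 1))).card = n + 1 := by
      simp
    simp only [hT, Finset.mem_filter, Finset.mem_univ, true_and]
    omega
  obtain ⟨J, hJT, hJmin⟩ := T.exists_min_image Finset.card ⟨_, hunivT⟩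
  have hJtight : J.card = f J + 1 := by
    simpa [hT] using hJT
  have hJe : IsEssential A J := by
    refine ⟨hJtight, ?_⟩
    intro J' hJ'
    have hc : J'.card < J.card := Finset.card_lt_card hJ'
    have hnt : J'.card ≠ f J' + 1 := by
      intro hmem
      have : J' ∈ T := by simp [hT, hmem]
      have := hJmin _ this
      omega
    have := h' J'
    show J'.card ≤ f J'
    omega
  have huniq : ∀ K1 K2 : Finset (Fin (n + 1)), IsEssential A K1 → IsEssential A K2 →
      K1 = K2 := by
    intro K1 K2 h1 h2
    by_contra hne
    have e1 : K1.card = f K1 + 1 := h1.1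
    have e2 : K2.card = f K2 + 1 := h2.1
    have hs := hsubmod K1 K2
    have hcards : (K1 ∪ K2).card + (K1 ∩ K2).card = K1.card + K2.card :=
      Finset.card_union_add_card_inter K1 K2
    have hU := h' (K1 ∪ K2)
    have hI := h' (K1 ∩ K2)
    have htight : (K1 ∩ K2).card = f (K1 ∩ K2) + 1 := by omega
    rcases lt_or_eq_of_le (Finset.inter_subset_left (s₁ := K1) (s₂ := K2)) with hlt | heq
    · have := h1.2 _ hlt
      have : (K1 ∩ K2).card ≤ f (K1 ∩ K2) := this
      omega
    · have hsub : K1 ⊆ K2 := Finset.inter_eq_left.mp heq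
      have hlt : K1 ⊂ K2 := hsub.ssubset_of_ne hne
      have := h2.2 _ hlt
      have : K1.card ≤ f K1 := this
      omega
  exact ⟨J, hJe, fun K hK => huniq K J hK hJe⟩
end

section
/- Let M be a lattice of rank n and A_0, ..., A_n nonempty finite subsets of M. If there exist two distinct essential subfamilies indexed by J and J', then there exists a subset I of {0,...,n} (namely I = J union J') with rank(sum_{i in I} L_{A_i}) <= #I - 2. -/
theorem aux_finrank_sup_inf {M : Type*} [AddCommGroup M] [Module.Free ℤ M] [Module.Finite ℤ M]
    (s t : Submodule ℤ M) :
    Module.finrank ℤ ↥(s ⊔ t) + Module.finrank ℤ ↥(s ⊓ t)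
      = Module.finrank ℤ ↥s + Module.finrank ℤ ↥t := by
  have h := Submodule.rank_sup_add_rank_inf_eq s t
  rw [← Nat.cast_inj (R := Cardinal)]
  push_cast
  rw [Submodule.finrank_eq_rank, Submodule.finrank_eq_rank, Submodule.finrank_eq_rank,
    Submodule.finrank_eq_rank]
  exact h

/-- If there are two distinct essential subfamilies `J ≠ J'`, then there
is a subset `I` (namely `I = J ∪ J'`) with `rank(∑_{i ∈ I} L_{A_i}) ≤ #I - 2`. -/
theorem rank_le_of_two_essential {n : ℕ} {M : Type*} [AddCommGroup M]
    [Module.Free ℤ M] [Module.Finite ℤ M] (hrk : Module.finrank ℤ M = n)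
    (A : Fin (n + 1) → Finset M) (hA : ∀ i, (A i).Nonempty)
    (J J' : Finset (Fin (n + 1))) (hJ : IsEssential A J) (hJ' : IsEssential A J')
    (hne : J ≠ J') :
    ∃ I : Finset (Fin (n + 1)), I = J ∪ J' ∧
      Module.finrank ℤ ↥(∑ i ∈ I, diffLattice (A i)) + 2 ≤ I.card := by
  classical
  refine ⟨J ∪ J', rfl, ?_⟩
  set f : Fin (n + 1) → Submodule ℤ M := fun i => diffLattice (A i) with hf
  -- sum over union equals sup
  have h1 : (∑ i ∈ J ∪ J', f i) + (∑ i ∈ J ∩ J', f i) = (∑ i ∈ J, f i) + (∑ i ∈ J', f i) :=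
    Finset.sum_union_inter
  rw [Submodule.add_eq_sup, Submodule.add_eq_sup] at h1
  have hle : (∑ i ∈ J ∩ J', f i) ≤ (∑ i ∈ J ∪ J', f i) :=
    Finset.sum_le_sum_of_subset (Finset.inter_subset_union)
  have hsup : (∑ i ∈ J ∪ J', f i) = (∑ i ∈ J, f i) ⊔ (∑ i ∈ J', f i) := by
    rw [← h1, sup_eq_left.mpr hle]
  -- the intersection sum is below the lattice inf
  have hKle : (∑ i ∈ J ∩ J', f i) ≤ (∑ i ∈ J, f i) ⊓ (∑ i ∈ J', f i) :=
    le_inf (Finset.sum_le_sum_of_subset Finset.inter_subset_left)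
      (Finset.sum_le_sum_of_subset Finset.inter_subset_right)
  have hmono : Module.finrank ℤ ↥(∑ i ∈ J ∩ J', f i)
      ≤ Module.finrank ℤ ↥((∑ i ∈ J, f i) ⊓ (∑ i ∈ J', f i)) :=
    Submodule.finrank_mono hKle
  -- essentiality applied to J ∩ J'
  have hKcard : (J ∩ J').card ≤ Module.finrank ℤ ↥(∑ i ∈ J ∩ J', f i) := by
    by_cases h : J ∩ J' = J
    · have hsub : J ⊆ J' := Finset.inter_eq_left.mp h
      rw [h]
      exact hJ'.2 _ (hsub.ssubset_of_ne hne)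
    · exact hJ.2 _ ((Finset.inter_subset_left).ssubset_of_ne h)
  have hsi := aux_finrank_sup_inf (∑ i ∈ J, f i) (∑ i ∈ J', f i)
  have hcards : (J ∪ J').card + (J ∩ J').card = J.card + J'.card :=
    Finset.card_union_add_card_inter J J'
  have h2 : J.card = Module.finrank ℤ ↥(∑ j ∈ J, f j) + 1 := hJ.1
  have h3 : J'.card = Module.finrank ℤ ↥(∑ j ∈ J', f j) + 1 := hJ'.1
  rw [hsup]
  omega
end

section
/- Let P and Q be compact convex bodies in R^n with P contained in R^m x {0}, and let pi: R^n -> R^{n-m} be the projection onto the last n-m coordinates. Then the coefficient of lambda^m in the polynomial lambda |-> vol(lambda P + Q) equals vol_m(P) times vol_{n-m}(pi(Q)), where vol_m(P) is the m-dimensional Lebesgue volume of P inside R^m x {0}. -/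
open Pointwise MeasureTheory

/-- The inclusion `ℝ^m → ℝ^n = ℝ^m × {0}` by extending with zeros. -/
def incl (m n : ℕ) (x : Fin m → ℝ) : Fin n → ℝ :=
  fun j => if h : (j : ℕ) < m then x ⟨j, h⟩ else 0

/-- The projection `ℝ^n → ℝ^{n-m}` onto the last `n - m` coordinates. -/
def projLast (m n : ℕ) (hm : m ≤ n) (x : Fin n → ℝ) : Fin (n - m) → ℝ :=
  fun i => x ⟨m + i, by omega⟩

/-! Split `ℝⁿ = ℝᵐ × ℝⁿ⁻ᵐ` and let `P₀ ⊆ ℝᵐ` be `P` seen in the first factor. The slice of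
`λP + Q` over `z` is `λP₀ + Q_z`, where the slice `Q_z` of `Q` is nonempty exactly for
`z ∈ π(Q)`. For such `z` its volume lies between `vol(λP₀) = λᵐ vol(P₀)` and
`vol(λP₀ + B_R) = λᵐ vol(P₀ + B_{R/λ})`, where the ball `B_R` contains all slices of `Q`. By
Fubini, `vol(λP + Q) / λᵐ` is squeezed between two functions tending to `vol(P₀) vol(π(Q))`,
and a polynomial with `p(λ) / λᵐ → c` has `m`-th coefficient `c`. -/

open Filter Topology Set Metric Module Polynomial

theorem Polynomial.coeff_eq_of_tendsto_eval_div_pow {p : ℝ[X]} {m : ℕ} {c : ℝ}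
    (h : Tendsto (fun x => p.eval x / x ^ m) atTop (𝓝 c)) : p.coeff m = c := by
  have hX : (X ^ m : ℝ[X]).degree = m := degree_X_pow m
  simp_rw [← eval_X_pow (R := ℝ)] at h
  rcases lt_trichotomy p.degree m with hlt | heq | hgt
  · rw [coeff_eq_zero_of_degree_lt hlt]
    exact tendsto_nhds_unique (p.div_tendsto_atTop_zero_of_degree_lt _ (hX ▸ hlt)) h
  · have hdeg : p.natDegree = m := natDegree_eq_of_degree_eq_some heq
    have := p.div_tendsto_atTop_leadingCoeff_div_of_degree_eq _ (hX ▸ heq)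
    rw [leadingCoeff_X_pow, div_one, leadingCoeff, hdeg] at this
    exact tendsto_nhds_unique this h
  · exact absurd h.abs (not_tendsto_nhds_of_tendsto_atTop
      (p.abs_div_tendsto_atTop_atTop_of_degree_gt _ (hX ▸ hgt) (pow_ne_zero _ X_ne_zero)) _)
theorem preimage_prodMk_smul_prod_zero_add {𝕜 E F : Type*} [AddGroup E] [SMul 𝕜 E]
    [AddGroup F] [SMulZeroClass 𝕜 F] (c : 𝕜) (A : Set E) (B : Set (E × F)) (z : F) :
    (·, z) ⁻¹' (c • (A ×ˢ {0}) + B) = c • A + (·, z) ⁻¹' B := by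
  ext y
  simp only [mem_preimage, Set.mem_add]
  constructor
  · rintro ⟨_, ⟨⟨a, _⟩, ⟨ha, rfl⟩, rfl⟩, b, hb, hab⟩
    refine ⟨c • a, ⟨a, ha, rfl⟩, b.1, ?_, congrArg Prod.fst hab⟩
    have : b.2 = z := by simpa using congrArg Prod.snd hab
    rwa [← this]
  · rintro ⟨_, ⟨a, ha, rfl⟩, b, hb, rfl⟩
    exact ⟨c • (a, 0), ⟨(a, 0), ⟨ha, rfl⟩, rfl⟩, (b, z), hb, by simp⟩

section

variable {E F : Type*} [NormedAddCommGroup E] [NormedSpace ℝ E] [MeasurableSpace E]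
  [BorelSpace E] [FiniteDimensional ℝ E] [NormedAddCommGroup F] [NormedSpace ℝ F]
  [MeasurableSpace F] [BorelSpace F] [FiniteDimensional ℝ F]

variable (μ : Measure E) [μ.IsAddHaarMeasure] (ν : Measure F) [SFinite ν]

theorem prod_smul_prod_zero_add_eq_lintegral {A : Set E} {B : Set (E × F)}
    (hA : IsCompact A) (hB : IsCompact B) (c : ℝ) :
    μ.prod ν (c • (A ×ˢ {0}) + B) = ∫⁻ z, μ (c • A + (·, z) ⁻¹' B) ∂ν := by
  have hK : IsCompact (c • (A ×ˢ ({0} : Set F)) + B) :=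
    ((hA.prod isCompact_singleton).smul c).add hB
  simp_rw [Measure.prod_apply_symm hK.measurableSet, preimage_prodMk_smul_prod_zero_add]

theorem ofReal_pow_mul_mul_le_prod_smul_prod_zero_add {A : Set E} {B : Set (E × F)}
    (hA : IsCompact A) (hB : IsCompact B) {c : ℝ} (hc : 0 ≤ c) :
    ENNReal.ofReal (c ^ finrank ℝ E) * μ A * ν (Prod.snd '' B) ≤
      μ.prod ν (c • (A ×ˢ {0}) + B) := by
  rw [prod_smul_prod_zero_add_eq_lintegral μ ν hA hB,
    ← lintegral_indicator_const (hB.image continuous_snd).measurableSet]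
  refine lintegral_mono fun z => ?_
  by_cases hz : z ∈ Prod.snd '' B
  · obtain ⟨⟨y, z⟩, hyz, rfl⟩ := hz
    calc _ = μ (c • A + {y}) := by
          rw [indicator_of_mem (mem_image_of_mem _ hyz), add_singleton, image_add_right,
            measure_preimage_add_right, Measure.addHaar_smul_of_nonneg μ hc]
      _ ≤ _ := measure_mono (add_subset_add_left (singleton_subset_iff.2 hyz))
  · simp [hz]

theorem prod_smul_prod_zero_add_le {A : Set E} {B : Set (E × F)}
    (hA : IsCompact A) (hB : IsCompact B) {R : ℝ} (hBR : B ⊆ closedBall 0 R) (c : ℝ) :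
    μ.prod ν (c • (A ×ˢ {0}) + B) ≤ μ (c • A + closedBall 0 R) * ν (Prod.snd '' B) := by
  rw [prod_smul_prod_zero_add_eq_lintegral μ ν hA hB,
    ← lintegral_indicator_const (hB.image continuous_snd).measurableSet]
  refine lintegral_mono fun z => ?_
  by_cases hz : z ∈ Prod.snd '' B
  · rw [indicator_of_mem hz]
    refine measure_mono (add_subset_add_left fun y hy => ?_)
    simpa using (norm_fst_le (y, z)).trans (mem_closedBall_zero_iff.1 (hBR hy))
  · have : (·, z) ⁻¹' B = ∅ :=
      eq_empty_of_forall_notMem fun y hy => hz ⟨(y, z), hy, rfl⟩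
    simp [this]

theorem measure_smul_add_closedBall {A : Set E} (hA : IsCompact A) {R c : ℝ}
    (hR : 0 ≤ R) (hc : 0 < c) :
    μ (c • A + closedBall 0 R) =
      ENNReal.ofReal (c ^ finrank ℝ E) * μ (cthickening (R / c) A) := by
  have hball : c • closedBall (0 : E) (R / c) = closedBall 0 R := by
    rw [_root_.smul_closedBall _ _ (by positivity), smul_zero, Real.norm_of_nonneg hc.le,
      mul_div_cancel₀ _ hc.ne']
  rw [← hA.add_closedBall_zero (by positivity), ← Measure.addHaar_smul_of_nonneg μ hc.le,
    smul_add, hball]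

theorem tendsto_measure_smul_add_closedBall_div_pow {A : Set E} (hA : IsCompact A)
    {R : ℝ} (hR : 0 ≤ R) :
    Tendsto (fun c : ℝ => (μ (c • A + closedBall 0 R)).toReal / c ^ finrank ℝ E) atTop
      (𝓝 (μ A).toReal) := by
  have hthick : Tendsto (fun c : ℝ => (μ (cthickening (R / c) A)).toReal) atTop
      (𝓝 (μ A).toReal) :=
    ((ENNReal.tendsto_toReal hA.measure_lt_top.ne).comp
      (tendsto_measure_cthickening_of_isCompact hA)).comp
      (tendsto_const_nhds.div_atTop tendsto_id)
  refine hthick.congr' ?_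
  filter_upwards [eventually_gt_atTop 0] with c hc
  rw [measure_smul_add_closedBall μ hA hR hc, ENNReal.toReal_mul,
    ENNReal.toReal_ofReal (by positivity), mul_div_cancel_left₀ _ (by positivity)]

variable [IsFiniteMeasureOnCompacts ν]

theorem tendsto_prod_smul_prod_zero_add_div_pow {A : Set E} {B : Set (E × F)}
    (hA : IsCompact A) (hB : IsCompact B) :
    Tendsto (fun c : ℝ => (μ.prod ν (c • (A ×ˢ {0}) + B)).toReal / c ^ finrank ℝ E) atTop
      (𝓝 ((μ A).toReal * (ν (Prod.snd '' B)).toReal)) := by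
  obtain ⟨R, hR, hBR⟩ := hB.isBounded.subset_closedBall_lt 0 0
  have hsnd : ν (Prod.snd '' B) ≠ ⊤ := (hB.image continuous_snd).measure_lt_top.ne
  have hfin (c : ℝ) : μ.prod ν (c • (A ×ˢ {0}) + B) ≠ ⊤ :=
    (((hA.prod isCompact_singleton).smul c).add hB).measure_lt_top.ne
  refine tendsto_of_tendsto_of_tendsto_of_le_of_le' tendsto_const_nhds
    ((tendsto_measure_smul_add_closedBall_div_pow μ hA hR.le).mul_const _) ?_ ?_
  · filter_upwards [eventually_gt_atTop 0] with c hc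
    have := ENNReal.toReal_mono (hfin c)
      (ofReal_pow_mul_mul_le_prod_smul_prod_zero_add μ ν hA hB hc.le)
    rw [ENNReal.toReal_mul, ENNReal.toReal_mul, ENNReal.toReal_ofReal (by positivity)] at this
    rw [le_div_iff₀ (by positivity)]
    linarith
  · filter_upwards [eventually_gt_atTop 0] with c hc
    have := ENNReal.toReal_mono
      (ENNReal.mul_ne_top ((hA.smul c).add (isCompact_closedBall 0 R)).measure_lt_top.ne hsnd)
      (prod_smul_prod_zero_add_le μ ν hA hB hBR c)
    rw [ENNReal.toReal_mul] at this
    rw [div_mul_eq_mul_div, div_le_div_iff_of_pos_right (by positivity)]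
    exact this

end

section

variable {m n : ℕ} (hm : m ≤ n)

def splitAt : (Fin n → ℝ) ≃ᵐ (Fin m → ℝ) × (Fin (n - m) → ℝ) :=
  (MeasurableEquiv.piCongrLeft (fun _ => ℝ)
    (finSumFinEquiv.trans (finCongr (by omega)))).symm.trans
      (MeasurableEquiv.sumPiEquivProdPi fun _ => ℝ)

theorem splitAt_apply (x : Fin n → ℝ) :
    splitAt hm x = (fun i => x (Fin.castLE hm i), projLast m n hm x) :=
  rfl

theorem measurePreserving_splitAt : MeasurePreserving (splitAt hm) :=
  (volume_measurePreserving_piCongrLeft _ _).symm.trans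
    (volume_measurePreserving_sumPiEquivProdPi _)

theorem continuous_splitAt : Continuous (splitAt hm) := by
  rw [funext (splitAt_apply hm)]
  unfold projLast
  fun_prop

theorem splitAt_incl (y : Fin m → ℝ) : splitAt hm (incl m n y) = (y, 0) := by
  ext i
  · simp [splitAt_apply, incl]
  · simp [splitAt_apply, incl, projLast]

theorem image_splitAt_smul_add (c : ℝ) (P Q : Set (Fin n → ℝ)) :
    splitAt hm '' (c • P + Q) = c • splitAt hm '' P + splitAt hm '' Q := by
  let L : (Fin n → ℝ) →ₗ[ℝ] (Fin m → ℝ) × (Fin (n - m) → ℝ) :=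
    (LinearMap.funLeft ℝ ℝ (Fin.castLE hm)).prod
      (LinearMap.funLeft ℝ ℝ fun i => ⟨m + i, by omega⟩)
  -- `splitAt hm` is definitionally the underlying function of `L`
  change L '' (c • P + Q) = c • L '' P + L '' Q
  rw [image_add, image_smul_set]

theorem image_splitAt_of_forall_eq_zero {P : Set (Fin n → ℝ)}
    (hP : ∀ x ∈ P, ∀ j : Fin n, m ≤ (j : ℕ) → x j = 0) :
    splitAt hm '' P = (incl m n ⁻¹' P) ×ˢ {0} := by
  ext ⟨y, z⟩
  constructor
  · rintro ⟨x, hx, hxyz⟩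
    have hz : z = 0 := by
      rw [show z = (splitAt hm x).2 by rw [hxyz], splitAt_apply]
      exact funext fun i => hP x hx _ (Nat.le_add_right m i)
    subst hz
    rw [← splitAt_incl hm, (splitAt hm).injective.eq_iff] at hxyz
    exact ⟨show incl m n y ∈ P from hxyz ▸ hx, rfl⟩
  · rintro ⟨hy, rfl : z = 0⟩
    exact ⟨incl m n y, hy, splitAt_incl hm y⟩

theorem snd_image_splitAt (Q : Set (Fin n → ℝ)) :
    Prod.snd '' (splitAt hm '' Q) = projLast m n hm '' Q := by
  rw [image_image]
  rfl

end

theorem coeff_volume_minkowski_general {n m : ℕ} (hm : m ≤ n)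
    (P Q : Set (Fin n → ℝ)) (hPc : IsCompact P)
    (hQc : IsCompact Q)
    (hP : ∀ x ∈ P, ∀ j : Fin n, m ≤ (j : ℕ) → x j = 0)
    (p : Polynomial ℝ)
    (hp : ∀ lam : ℝ, 0 ≤ lam → p.eval lam = (volume (lam • P + Q)).toReal) :
    p.coeff m = (volume (incl m n ⁻¹' P)).toReal *
      (volume (projLast m n hm '' Q)).toReal := by
  have hsplitP := image_splitAt_of_forall_eq_zero hm hP
  have hA : IsCompact (incl m n ⁻¹' P) := by
    have := (hPc.image (continuous_splitAt hm)).image continuous_fst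
    rwa [hsplitP, fst_image_prod _ (singleton_nonempty 0)] at this
  have hlim := tendsto_prod_smul_prod_zero_add_div_pow volume volume hA
    (hQc.image (continuous_splitAt hm))
  rw [← Measure.volume_eq_prod, Module.finrank_fin_fun, snd_image_splitAt] at hlim
  refine coeff_eq_of_tendsto_eval_div_pow (hlim.congr' ?_)
  filter_upwards [eventually_ge_atTop 0] with c hc
  rw [hp c hc, ← hsplitP, ← image_splitAt_smul_add, MeasurableEquiv.image_eq_preimage_symm,
    ((measurePreserving_splitAt hm).symm _).measure_preimage_equiv]

/-- Let `P, Q ⊆ ℝ^n` be compact convex bodies with `P ⊆ ℝ^m × {0}`.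
If `p` is a polynomial with `p(λ) = vol(λP + Q)` for all `λ ≥ 0`, then the coefficient
of `λ^m` in `p` equals `vol_m(P) * vol_{n-m}(π(Q))`, where `π : ℝ^n → ℝ^{n-m}` is the
projection onto the last `n - m` coordinates and `vol_m(P)` is the `m`-dimensional
Lebesgue volume of `P` inside `ℝ^m × {0}`. -/
theorem coeff_volume_minkowski {n m : ℕ} (hm : m ≤ n)
    (P Q : Set (Fin n → ℝ)) (hPc : IsCompact P) (hPcv : Convex ℝ P) (hPne : P.Nonempty)
    (hQc : IsCompact Q) (hQcv : Convex ℝ Q) (hQne : Q.Nonempty)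
    (hP : ∀ x ∈ P, ∀ j : Fin n, m ≤ (j : ℕ) → x j = 0)
    (p : Polynomial ℝ)
    (hp : ∀ lam : ℝ, 0 ≤ lam → p.eval lam = (volume (lam • P + Q)).toReal) :
    p.coeff m = (volume (incl m n ⁻¹' P)).toReal *
      (volume (projLast m n hm '' Q)).toReal :=
  coeff_volume_minkowski_general hm P Q hPc hQc hP p hp
end
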